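/- Let q ≥ 1 be an integer, α > 0, and n_1, ..., n_q non-negative integers with n = ∑_k n_k > 0. Then the local local BDeu score -log pGam(α, n) + ∑_{k=1}^q log pGam(α/q, n_k) is at most the maximized multinomial log-likelihood ML(n_1,...,n_q) = ∑_{k=1}^q n_k · log(n_k/n), with the convention 0·log 0 = 0. -/

import Mathlib

/-- `pGam α x = Γ(x+α)/Γ(α)`. -/
noncomputable def pGam (α : ℝ) (x : ℕ) : ℝ := Real.Gamma (x + α) / Real.Gamma α

/-!
`∏ₖ pGam βₖ nₖ / pGam (∑ₖ βₖ) n` is the Dirichlet-multinomial probability of a sequence with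
counts `nₖ`, i.e. the mean of `∏ₖ pₖ ^ nₖ` under a Dirichlet prior, so it is at most
`maxₚ ∏ₖ pₖ ^ nₖ = ∏ₖ (nₖ / n) ^ nₖ`. We only need this for two categories, where the prior is
a Beta distribution and `t ^ a (1 - t) ^ b ≤ a ^ a b ^ b / (a + b) ^ (a + b)` follows from
`x ≤ exp (x - 1)`. Since merging two categories of a Dirichlet prior adds their parameters, the
general case follows by adding the categories one at a time.
-/

open Real Set MeasureTheory ProbabilityTheory

lemma pow_le_pow_mul_exp_sub {u : ℝ} (hu : 0 ≤ u) (n : ℕ) :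
    u ^ n ≤ (n : ℝ) ^ n * exp (u - n) := by
  rcases Nat.eq_zero_or_pos n with rfl | hn
  · simpa using one_le_exp hu
  have hn' : (0 : ℝ) < n := by exact_mod_cast hn
  have h : u / n ≤ exp (u / n - 1) := by linarith [add_one_le_exp (u / n - 1)]
  calc u ^ n = (n : ℝ) ^ n * (u / n) ^ n := by
        rw [div_pow, mul_div_cancel₀ _ (pow_ne_zero _ hn'.ne')]
    _ ≤ (n : ℝ) ^ n * exp (u / n - 1) ^ n := by gcongr
    _ = (n : ℝ) ^ n * exp (u - n) := by
      rw [← exp_nat_mul]; congr 2; field_simp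

lemma pow_mul_one_sub_pow_mul_pow_le (a b : ℕ) {t : ℝ} (h0 : 0 ≤ t) (h1 : t ≤ 1) :
    t ^ a * (1 - t) ^ b * ((a + b : ℕ) : ℝ) ^ (a + b) ≤ (a : ℝ) ^ a * (b : ℝ) ^ b := by
  set s : ℝ := ((a + b : ℕ) : ℝ)
  have hs : 0 ≤ s := Nat.cast_nonneg _
  calc t ^ a * (1 - t) ^ b * s ^ (a + b) = (t * s) ^ a * ((1 - t) * s) ^ b := by
        rw [mul_pow, mul_pow, pow_add]; ring
    _ ≤ ((a : ℝ) ^ a * exp (t * s - a)) * ((b : ℝ) ^ b * exp ((1 - t) * s - b)) := by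
      gcongr
      · exact pow_le_pow_mul_exp_sub (by positivity) a
      · exact pow_le_pow_mul_exp_sub (mul_nonneg (by linarith) hs) b
    _ = (a : ℝ) ^ a * (b : ℝ) ^ b := by
      have h : t * s - a + ((1 - t) * s - b) = 0 := by simp only [s]; push_cast; ring
      rw [mul_mul_mul_comm, ← exp_add, h, exp_zero, mul_one]

lemma beta_eq_intervalIntegral {x y : ℝ} (hx : 0 < x) (hy : 0 < y) :
    beta x y = ∫ t in (0 : ℝ)..1, t ^ (x - 1) * (1 - t) ^ (y - 1) := by
  have h : Complex.betaIntegral x y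
      = ((∫ t in (0 : ℝ)..1, t ^ (x - 1) * (1 - t) ^ (y - 1) : ℝ) : ℂ) := by
    rw [Complex.betaIntegral, ← intervalIntegral.integral_ofReal]
    refine intervalIntegral.integral_congr fun t ht => ?_
    rw [uIcc_of_le zero_le_one] at ht
    rw [Complex.ofReal_mul, Complex.ofReal_cpow ht.1, Complex.ofReal_cpow (by linarith [ht.2])]
    push_cast
    rfl
  rw [beta_eq_betaIntegralReal x y hx hy, h, Complex.ofReal_re]

lemma intervalIntegrable_rpow_mul_one_sub_rpow {x y : ℝ} (hx : 0 < x) (hy : 0 < y) :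
    IntervalIntegrable (fun t : ℝ => t ^ (x - 1) * (1 - t) ^ (y - 1)) volume 0 1 := by
  rw [intervalIntegrable_iff_integrableOn_Ioo_of_le zero_le_one]
  have h := (Complex.betaIntegral_convergent (u := x) (v := y) (by simpa using hx)
    (by simpa using hy)).norm
  rw [intervalIntegrable_iff_integrableOn_Ioo_of_le zero_le_one] at h
  refine h.congr_fun (fun t ht => ?_) measurableSet_Ioo
  have h1 : 0 < 1 - t := by linarith [ht.2]
  simp only [norm_mul]
  rw [Complex.norm_cpow_eq_rpow_re_of_pos ht.1,
    show (1 : ℂ) - t = ((1 - t : ℝ) : ℂ) by push_cast; rfl, Complex.norm_cpow_eq_rpow_re_of_pos h1]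
  simp

lemma beta_add_nat_mul_pow_le {x y : ℝ} (hx : 0 < x) (hy : 0 < y) (a b : ℕ) :
    beta (a + x) (b + y) * ((a + b : ℕ) : ℝ) ^ (a + b)
      ≤ (a : ℝ) ^ a * (b : ℝ) ^ b * beta x y := by
  have hax : 0 < a + x := by positivity
  have hby : 0 < b + y := by positivity
  rw [beta_eq_intervalIntegral hax hby, beta_eq_intervalIntegral hx hy,
    ← intervalIntegral.integral_mul_const, ← intervalIntegral.integral_const_mul]
  refine intervalIntegral.integral_mono_on_of_le_Ioo zero_le_one
    ((intervalIntegrable_rpow_mul_one_sub_rpow hax hby).mul_const _)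
    ((intervalIntegrable_rpow_mul_one_sub_rpow hx hy).const_mul _) fun t ht => ?_
  have h1 : 0 < 1 - t := by linarith [ht.2]
  rw [add_sub_assoc, add_sub_assoc, rpow_add ht.1, rpow_add h1, rpow_natCast, rpow_natCast]
  calc t ^ a * t ^ (x - 1) * ((1 - t) ^ b * (1 - t) ^ (y - 1)) * ((a + b : ℕ) : ℝ) ^ (a + b)
      = t ^ a * (1 - t) ^ b * ((a + b : ℕ) : ℝ) ^ (a + b)
          * (t ^ (x - 1) * (1 - t) ^ (y - 1)) := by ring
    _ ≤ (a : ℝ) ^ a * (b : ℝ) ^ b * (t ^ (x - 1) * (1 - t) ^ (y - 1)) :=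
        mul_le_mul_of_nonneg_right (pow_mul_one_sub_pow_mul_pow_le a b ht.1.le ht.2.le)
          (mul_nonneg (rpow_nonneg ht.1.le _) (rpow_nonneg h1.le _))

lemma natCast_pow_self_pos (m : ℕ) : (0 : ℝ) < (m : ℝ) ^ m := by
  exact_mod_cast Nat.pow_self_pos

lemma pGam_pos {α : ℝ} (hα : 0 < α) (m : ℕ) : 0 < pGam α m :=
  div_pos (Gamma_pos_of_pos (by positivity)) (Gamma_pos_of_pos hα)

lemma pGam_mul_pGam_mul_beta {β₁ β₂ : ℝ} (h₁ : 0 < β₁) (h₂ : 0 < β₂) (a b : ℕ) :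
    pGam β₁ a * pGam β₂ b * beta β₁ β₂ = pGam (β₁ + β₂) (a + b) * beta (a + β₁) (b + β₂) := by
  have hG₁ := (Gamma_pos_of_pos h₁).ne'
  have hG₂ := (Gamma_pos_of_pos h₂).ne'
  have hG : Gamma (((a + b : ℕ) : ℝ) + (β₁ + β₂)) ≠ 0 := (Gamma_pos_of_pos (by positivity)).ne'
  have hsum : (a + β₁) + (b + β₂) = ((a + b : ℕ) : ℝ) + (β₁ + β₂) := by push_cast; ring
  simp only [pGam, beta, hsum]
  field_simp

lemma pGam_mul_pGam_mul_pow_le {β₁ β₂ : ℝ} (h₁ : 0 < β₁) (h₂ : 0 < β₂) (a b : ℕ) :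
    pGam β₁ a * pGam β₂ b * ((a + b : ℕ) : ℝ) ^ (a + b)
      ≤ pGam (β₁ + β₂) (a + b) * ((a : ℝ) ^ a * (b : ℝ) ^ b) := by
  have hB := beta_pos h₁ h₂
  refine le_of_mul_le_mul_right ?_ hB
  calc pGam β₁ a * pGam β₂ b * ((a + b : ℕ) : ℝ) ^ (a + b) * beta β₁ β₂
      = pGam (β₁ + β₂) (a + b) * (beta (a + β₁) (b + β₂) * ((a + b : ℕ) : ℝ) ^ (a + b)) := by
        rw [mul_right_comm, pGam_mul_pGam_mul_beta h₁ h₂, mul_assoc]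
    _ ≤ pGam (β₁ + β₂) (a + b) * ((a : ℝ) ^ a * (b : ℝ) ^ b * beta β₁ β₂) :=
        mul_le_mul_of_nonneg_left (beta_add_nat_mul_pow_le h₁ h₂ a b)
          (pGam_pos (by positivity) _).le
    _ = pGam (β₁ + β₂) (a + b) * ((a : ℝ) ^ a * (b : ℝ) ^ b) * beta β₁ β₂ := by ring

lemma prod_pGam_mul_pow_sum_le {ι : Type*} {s : Finset ι} (hs : s.Nonempty) {β : ι → ℝ}
    (hβ : ∀ k ∈ s, 0 < β k) (n : ι → ℕ) :
    (∏ k ∈ s, pGam (β k) (n k)) * ((∑ k ∈ s, n k : ℕ) : ℝ) ^ (∑ k ∈ s, n k)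
      ≤ pGam (∑ k ∈ s, β k) (∑ k ∈ s, n k) * ∏ k ∈ s, (n k : ℝ) ^ n k := by
  induction hs using Finset.Nonempty.cons_induction with
  | singleton i => simp
  | cons i s _ hs ih =>
    simp only [Finset.mem_cons, forall_eq_or_imp] at hβ
    have hβs : 0 < ∑ k ∈ s, β k := Finset.sum_pos hβ.2 hs
    have IH := ih hβ.2
    simp only [Finset.prod_cons, Finset.sum_cons]
    set M := ∑ k ∈ s, n k
    refine le_of_mul_le_mul_right ?_ (natCast_pow_self_pos M)
    calc pGam (β i) (n i) * (∏ k ∈ s, pGam (β k) (n k)) * ((n i + M : ℕ) : ℝ) ^ (n i + M)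
          * (M : ℝ) ^ M
        = pGam (β i) (n i) * ((n i + M : ℕ) : ℝ) ^ (n i + M)
          * ((∏ k ∈ s, pGam (β k) (n k)) * (M : ℝ) ^ M) := by ring
      _ ≤ pGam (β i) (n i) * ((n i + M : ℕ) : ℝ) ^ (n i + M)
          * (pGam (∑ k ∈ s, β k) M * ∏ k ∈ s, (n k : ℝ) ^ n k) :=
        mul_le_mul_of_nonneg_left IH (by have := pGam_pos hβ.1 (n i); positivity)
      _ = pGam (β i) (n i) * pGam (∑ k ∈ s, β k) M * ((n i + M : ℕ) : ℝ) ^ (n i + M)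
          * ∏ k ∈ s, (n k : ℝ) ^ n k := by ring
      _ ≤ pGam (β i + ∑ k ∈ s, β k) (n i + M) * ((n i : ℝ) ^ n i * (M : ℝ) ^ M)
          * ∏ k ∈ s, (n k : ℝ) ^ n k :=
        mul_le_mul_of_nonneg_right (pGam_mul_pGam_mul_pow_le hβ.1 hβs _ _)
          (Finset.prod_nonneg fun _ _ => by positivity)
      _ = _ := by ring

lemma sum_mul_log_div_sum {ι : Type*} (s : Finset ι) (n : ι → ℕ) :
    ∑ k ∈ s, (n k : ℝ) * log (n k / ((∑ l ∈ s, n l : ℕ) : ℝ))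
      = ∑ k ∈ s, (n k : ℝ) * log (n k)
        - ((∑ l ∈ s, n l : ℕ) : ℝ) * log (∑ l ∈ s, n l : ℕ) := by
  rw [Nat.cast_sum s n, Finset.sum_mul, ← Finset.sum_sub_distrib]
  refine Finset.sum_congr rfl fun k hk => ?_
  rcases eq_or_ne (n k) 0 with h | h
  · simp [h]
  have hnk : (0 : ℝ) < n k := by positivity
  have hN : (0 : ℝ) < ∑ l ∈ s, (n l : ℝ) :=
    hnk.trans_le (Finset.single_le_sum (fun l _ => Nat.cast_nonneg (n l)) hk)
  rw [log_div hnk.ne' hN.ne']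
  ring

theorem sum_log_pGam_sub_log_pGam_sum_le {ι : Type*} {s : Finset ι} (hs : s.Nonempty)
    {β : ι → ℝ} (hβ : ∀ k ∈ s, 0 < β k) (n : ι → ℕ) :
    ∑ k ∈ s, log (pGam (β k) (n k)) - log (pGam (∑ k ∈ s, β k) (∑ k ∈ s, n k))
      ≤ ∑ k ∈ s, (n k : ℝ) * log (n k / ((∑ l ∈ s, n l : ℕ) : ℝ)) := by
  set N := ∑ k ∈ s, n k
  have hP : 0 < ∏ k ∈ s, pGam (β k) (n k) := Finset.prod_pos fun k hk => pGam_pos (hβ k hk) _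
  have hQ : 0 < ∏ k ∈ s, (n k : ℝ) ^ n k := Finset.prod_pos fun k _ => natCast_pow_self_pos _
  have h := log_le_log (mul_pos hP (natCast_pow_self_pos N)) (prod_pGam_mul_pow_sum_le hs hβ n)
  rw [log_mul hP.ne' (natCast_pow_self_pos N).ne',
    log_mul (pGam_pos (Finset.sum_pos hβ hs) N).ne' hQ.ne',
    log_prod fun k hk => (pGam_pos (hβ k hk) _).ne',
    log_prod fun k _ => (natCast_pow_self_pos _).ne'] at h
  simp only [log_pow] at h
  rw [sum_mul_log_div_sum]
  linarith

theorem stmt_10_general (q : ℕ) (hq : 1 ≤ q) (α : ℝ) (hα : 0 < α) (n : ℕ → ℕ) :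
    -Real.log (pGam α (∑ k ∈ Finset.range q, n k)) +
        ∑ k ∈ Finset.range q, Real.log (pGam (α / q) (n k))
      ≤ ∑ k ∈ Finset.range q,
          (n k : ℝ) * Real.log ((n k : ℝ) / ((∑ l ∈ Finset.range q, n l : ℕ) : ℝ)) := by
  have hq₀ : q ≠ 0 := Nat.one_le_iff_ne_zero.mp hq
  have hsum : ∑ _k ∈ Finset.range q, α / q = α := by
    rw [Finset.sum_const, Finset.card_range, nsmul_eq_mul]
    field_simp
  have h := sum_log_pGam_sub_log_pGam_sum_le (Finset.nonempty_range_iff.mpr hq₀)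
    (fun _ _ => by positivity : ∀ k ∈ Finset.range q, 0 < α / q) n
  rw [hsum] at h
  linarith

theorem stmt_10 (q : ℕ) (hq : 1 ≤ q) (α : ℝ) (hα : 0 < α) (n : ℕ → ℕ)
    (hN : 0 < ∑ k ∈ Finset.range q, n k) :
    -Real.log (pGam α (∑ k ∈ Finset.range q, n k)) +
        ∑ k ∈ Finset.range q, Real.log (pGam (α / q) (n k))
      ≤ ∑ k ∈ Finset.range q,
          (n k : ℝ) * Real.log ((n k : ℝ) / ((∑ l ∈ Finset.range q, n l : ℕ) : ℝ)) :=
  stmt_10_general q hq α hα n
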